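/- Let Q = S₄ be the symmetric group on 4 letters, let P = A₄ be its alternating subgroup, let (id_P : P → P) be the identity crossed module on P, and let ι : P → Q be the inclusion. Then for any induced crossed module (∂ : I → Q, j) of (id_P : P → P) along ι, the group I is isomorphic to A₄ × C₃, where C₃ is the cyclic group of order 3, and ker ∂ is cyclic of order 3. -/
import Mathlib


universe u

/-- A crossed module `(μ : M → P)`: groups `M`, `P`, a (right) action of `P` on `M` by
group automorphisms, written `act m p` for `m ^ p`, and a homomorphism `μ : M →* P`
satisfying CM1: `μ (m ^ p) = p⁻¹ * μ m * p` and CM2: `n ^ (μ m) = m⁻¹ * n * m`. -/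
structure CrossedModule (M P : Type u) [Group M] [Group P] where
  μ : M →* P
  act : M → P → M
  act_mul : ∀ m n p, act (m * n) p = act m p * act n p
  act_one : ∀ m, act m 1 = m
  act_act : ∀ m p q, act (act m p) q = act m (p * q)
  cm1 : ∀ m p, μ (act m p) = p⁻¹ * μ m * p
  cm2 : ∀ m n, act n (μ m) = m⁻¹ * n * m

/-- A morphism of crossed modules `(f, g) : (μ : M → P) → (ν : N → Q)`:
group homomorphisms `f : M → N`, `g : P → Q` with `ν ∘ f = g ∘ μ` and
`f (m ^ p) = (f m) ^ (g p)`. -/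
def CrossedModule.IsMorphism {M P N Q : Type u} [Group M] [Group P] [Group N] [Group Q]
    (X : CrossedModule M P) (Y : CrossedModule N Q) (f : M →* N) (g : P →* Q) : Prop :=
  (∀ m, Y.μ (f m) = g (X.μ m)) ∧ ∀ m p, f (X.act m p) = Y.act (f m) (g p)

/-- `(∂ : I → Q)` together with `j : M → I` is an induced crossed module of `(μ : M → P)`
along `ι : P → Q`: `(j, ι)` is a morphism of crossed modules, and for every crossed module
`(ν : N → Q)` and morphism `(f, ι) : (μ : M → P) → (ν : N → Q)` there is a unique group
homomorphism `φ : I → N` with `ν ∘ φ = ∂`, `φ (x ^ q) = (φ x) ^ q`, and `φ ∘ j = f`. -/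
def IsInducedCrossedModule {M P Q I : Type u} [Group M] [Group P] [Group Q] [Group I]
    (X : CrossedModule M P) (ι : P →* Q) (Y : CrossedModule I Q) (j : M →* I) : Prop :=
  CrossedModule.IsMorphism X Y j ι ∧
  ∀ (N : Type u) [Group N] (Z : CrossedModule N Q) (f : M →* N),
    CrossedModule.IsMorphism X Z f ι →
    ∃! φ : I →* N, (∀ x, Z.μ (φ x) = Y.μ x) ∧
      (∀ x q, φ (Y.act x q) = Z.act (φ x) q) ∧ ∀ m, φ (j m) = f m

/-- The identity crossed module `(id_P : P → P)` with `P` acting on itself by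
conjugation, `m ^ p = p⁻¹ * m * p`. -/
def conjCM (P : Type u) [Group P] : CrossedModule P P where
  μ := MonoidHom.id P
  act m p := p⁻¹ * m * p
  act_mul m n p := by group
  act_one m := by group
  act_act m p q := by group
  cm1 m p := rfl
  cm2 m n := rfl


namespace A4S4Aux

abbrev Q4 := Equiv.Perm (Fin 4)
abbrev A4 : Subgroup Q4 := alternatingGroup (Fin 4)

instance : DecidablePred (· ∈ alternatingGroup (Fin 4)) := fun p =>
  decidable_of_iff _ (Equiv.Perm.mem_alternatingGroup (f := p)).symm

def c0 : Q4 := Equiv.swap 0 1 * Equiv.swap 1 2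
def t0 : Q4 := Equiv.swap 0 1

def w (p : Q4) : ZMod 3 :=
  if p * p = 1 then 0 else if (p * c0) * (p * c0) = 1 then 2 else 1

def ψ (q : Q4) : ZMod 3 := if Equiv.Perm.sign q = 1 then 0 else 1

lemma c0_mem : c0 ∈ A4 := by decide
lemma t0t0 : t0 * t0 = 1 := by decide
lemma sign_t0 : Equiv.Perm.sign t0 = -1 := by decide
lemma w_c0 : w c0 = 1 := by decide
lemma c0_cube : c0 ^ 3 = 1 := by decide
lemma conj_mem (q : Q4) {p : Q4} (hp : p ∈ A4) : q⁻¹ * p * q ∈ A4 := by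
  rw [Equiv.Perm.mem_alternatingGroup] at *
  rw [map_mul, map_mul, map_inv, hp, mul_one, mul_comm, mul_inv_cancel]

set_option maxHeartbeats 4000000 in
set_option maxRecDepth 100000 in
lemma w_mul : ∀ p q : Q4, p ∈ A4 → q ∈ A4 → w (p * q) = w p + w q := by decide

set_option maxHeartbeats 4000000 in
set_option maxRecDepth 100000 in
lemma w_conj : ∀ p q : Q4, p ∈ A4 →
    w (q⁻¹ * p * q) = (if Equiv.Perm.sign q = 1 then w p else - w p) := by decide

abbrev N₀ := ↥A4 × Multiplicative (ZMod 3)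

lemma ψ_even {q : Q4} (h : Equiv.Perm.sign q = 1) : ψ q = 0 := by simp [ψ, h]
lemma ψ_odd {q : Q4} (h : Equiv.Perm.sign q = -1) : ψ q = 1 := by simp [ψ, h]

lemma sign_cases (q : Q4) : Equiv.Perm.sign q = 1 ∨ Equiv.Perm.sign q = -1 :=
  Int.units_eq_one_or _

def act₀ (x : N₀) (q : Q4) : N₀ :=
  (⟨q⁻¹ * ↑x.1 * q, conj_mem q x.1.2⟩, x.2 * Multiplicative.ofAdd (ψ q * w ↑x.1))

def μ₀ : N₀ →* Q4 := A4.subtype.comp (MonoidHom.fst _ _)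

lemma w_conj' (q : Q4) (p : ↥A4) :
    w (q⁻¹ * ↑p * q) = (if Equiv.Perm.sign q = 1 then w ↑p else - w ↑p) :=
  w_conj ↑p q p.2

def Z₀ : CrossedModule N₀ Q4 where
  μ := μ₀
  act := act₀
  act_mul m n q := by
    refine Prod.ext (Subtype.ext ?_) ?_
    · show q⁻¹ * (↑m.1 * ↑n.1) * q = (q⁻¹ * ↑m.1 * q) * (q⁻¹ * ↑n.1 * q)
      group
    · apply Multiplicative.toAdd.injective
      show Multiplicative.toAdd (m.2 * n.2 * Multiplicative.ofAdd (ψ q * w (↑m.1 * ↑n.1)))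
        = Multiplicative.toAdd ((m.2 * Multiplicative.ofAdd (ψ q * w ↑m.1)) *
            (n.2 * Multiplicative.ofAdd (ψ q * w ↑n.1)))
      rw [w_mul ↑m.1 ↑n.1 m.1.2 n.1.2]
      simp
      ring
  act_one m := by
    refine Prod.ext (Subtype.ext ?_) ?_
    · show (1 : Q4)⁻¹ * (↑m.1 : Q4) * 1 = (↑m.1 : Q4)
      group
    · apply Multiplicative.toAdd.injective
      show Multiplicative.toAdd (m.2 * Multiplicative.ofAdd (ψ 1 * w ↑m.1)) = Multiplicative.toAdd m.2
      simp [ψ]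
  act_act m q q' := by
    refine Prod.ext (Subtype.ext ?_) ?_
    · show q'⁻¹ * (q⁻¹ * ↑m.1 * q) * q' = (q * q')⁻¹ * ↑m.1 * (q * q')
      group
    · apply Multiplicative.toAdd.injective
      show Multiplicative.toAdd ((m.2 * Multiplicative.ofAdd (ψ q * w ↑m.1)) *
          Multiplicative.ofAdd (ψ q' * w (q⁻¹ * ↑m.1 * q)))
        = Multiplicative.toAdd (m.2 * Multiplicative.ofAdd (ψ (q * q') * w ↑m.1))
      rw [w_conj' q m.1]
      simp only [toAdd_mul, toAdd_ofAdd]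
      have hs : Equiv.Perm.sign (q * q') = Equiv.Perm.sign q * Equiv.Perm.sign q' := map_mul _ _ _
      rcases sign_cases q with h1 | h1 <;> rcases sign_cases q' with h2 | h2 <;>
        simp [ψ, h1, h2, hs] <;> ring_nf
  cm1 m q := by
    show q⁻¹ * ↑m.1 * q = q⁻¹ * ↑m.1 * q
    rfl
  cm2 m n := by
    have hsm : Equiv.Perm.sign (↑m.1 : Q4) = 1 := Equiv.Perm.mem_alternatingGroup.mp m.1.2
    refine Prod.ext (Subtype.ext ?_) ?_
    · show (↑m.1 : Q4)⁻¹ * ↑n.1 * ↑m.1 = ↑(m.1⁻¹ * n.1 * m.1)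
      rfl
    · apply Multiplicative.toAdd.injective
      show Multiplicative.toAdd (n.2 * Multiplicative.ofAdd (ψ ↑m.1 * w ↑n.1))
        = Multiplicative.toAdd (m.2⁻¹ * n.2 * m.2)
      rw [ψ_even hsm]
      simp [add_comm]

lemma w_tc0t : w (t0⁻¹ * c0 * t0) = 2 := by decide
set_option maxHeartbeats 4000000 in
set_option maxRecDepth 100000 in
lemma decomp : ∀ p : Q4, p ∈ A4 →
    ((c0 ^ (w p).val)⁻¹ * p = 1 ∨
     (c0 ^ (w p).val)⁻¹ * p = Equiv.swap (0 : Fin 4) 1 * Equiv.swap 2 3 ∨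
     (c0 ^ (w p).val)⁻¹ * p = Equiv.swap (0 : Fin 4) 2 * Equiv.swap 1 3 ∨
     (c0 ^ (w p).val)⁻¹ * p = Equiv.swap (0 : Fin 4) 3 * Equiv.swap 1 2) := by decide
lemma y1_mem : Equiv.swap (0 : Fin 4) 2 * Equiv.swap 2 3 ∈ A4 := by decide
lemma y2_mem : Equiv.swap (0 : Fin 4) 1 * Equiv.swap 1 3 ∈ A4 := by decide
lemma v1_mem : Equiv.swap (0 : Fin 4) 1 * Equiv.swap 2 3 ∈ A4 := by decide
lemma v2_mem : Equiv.swap (0 : Fin 4) 2 * Equiv.swap 1 3 ∈ A4 := by decide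
lemma v3_mem : Equiv.swap (0 : Fin 4) 3 * Equiv.swap 1 2 ∈ A4 := by decide
lemma comm_v1 : Equiv.swap (0 : Fin 4) 1 * Equiv.swap 2 3 =
  (Equiv.swap (0 : Fin 4) 3 * Equiv.swap 1 2) * (Equiv.swap (0 : Fin 4) 2 * Equiv.swap 2 3) *
  (Equiv.swap (0 : Fin 4) 3 * Equiv.swap 1 2)⁻¹ * (Equiv.swap (0 : Fin 4) 2 * Equiv.swap 2 3)⁻¹ := by
  decide
lemma comm_v2 : Equiv.swap (0 : Fin 4) 2 * Equiv.swap 1 3 =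
  (Equiv.swap (0 : Fin 4) 3 * Equiv.swap 1 2) * (Equiv.swap (0 : Fin 4) 1 * Equiv.swap 1 3) *
  (Equiv.swap (0 : Fin 4) 3 * Equiv.swap 1 2)⁻¹ * (Equiv.swap (0 : Fin 4) 1 * Equiv.swap 1 3)⁻¹ := by
  decide
lemma comm_v3 : Equiv.swap (0 : Fin 4) 3 * Equiv.swap 1 2 =
  (Equiv.swap (0 : Fin 4) 2 * Equiv.swap 2 3) * (Equiv.swap (0 : Fin 4) 2 * Equiv.swap 1 3) *
  (Equiv.swap (0 : Fin 4) 2 * Equiv.swap 2 3)⁻¹ * (Equiv.swap (0 : Fin 4) 2 * Equiv.swap 1 3)⁻¹ := by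
  decide

def j₀ : ↥A4 →* N₀ where
  toFun p := (p, 1)
  map_one' := rfl
  map_mul' p q := by simp

def c0' : ↥A4 := ⟨c0, c0_mem⟩

def conjT (p : ↥A4) : ↥A4 := ⟨t0⁻¹ * ↑p * t0, conj_mem t0 p.2⟩

lemma mor₀ : CrossedModule.IsMorphism (conjCM ↥A4) Z₀ j₀ A4.subtype := by
  constructor
  · intro m; rfl
  · intro m p
    have hs : Equiv.Perm.sign (A4.subtype p) = 1 := Equiv.Perm.mem_alternatingGroup.mp p.2
    refine Prod.ext (Subtype.ext ?_) ?_
    · rfl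
    · show (1 : Multiplicative (ZMod 3))
        = 1 * Multiplicative.ofAdd (ψ (A4.subtype p) * w ↑m)
      rw [ψ_even hs]
      simp

section Universal

variable {N : Type} [Group N] (Z : CrossedModule N Q4) (f : ↥A4 →* N)
  (hf1 : ∀ m, Z.μ (f m) = A4.subtype m)
  (hf2 : ∀ m p, f ((conjCM ↥A4).act m p) = Z.act (f m) (A4.subtype p))

-- basic crossed module consequences
lemma act_one' (q : Q4) : Z.act 1 q = 1 := by
  have := Z.act_mul 1 1 q
  rw [mul_one] at this
  exact (left_eq_mul.mp this)

lemma act_inv (m : N) (q : Q4) : Z.act m⁻¹ q = (Z.act m q)⁻¹ := by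
  have := Z.act_mul m⁻¹ m q
  rw [inv_mul_cancel, act_one'] at this
  exact eq_inv_of_mul_eq_one_left this.symm

lemma act_pow (m : N) (q : Q4) (n : ℕ) : Z.act (m ^ n) q = (Z.act m q) ^ n := by
  induction n with
  | zero => simpa using act_one' Z q
  | succ n ih => rw [pow_succ, pow_succ, Z.act_mul, ih]

lemma ker_central {x : N} (hx : Z.μ x = 1) (y : N) : x * y = y * x := by
  have := Z.cm2 x y
  rw [hx, Z.act_one] at this
  calc x * y = x * (x⁻¹ * y * x) := by rw [← this]
  _ = y * x := by group

include hf1 in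
lemma act_even_ker {x : N} (hx : Z.μ x = 1) {q : Q4} (hq : q ∈ A4) :
    Z.act x q = x := by
  have h1 : q = Z.μ (f ⟨q, hq⟩) := by rw [hf1]; rfl
  rw [h1, Z.cm2]
  have hc := ker_central Z hx (f ⟨q, hq⟩)
  rw [mul_assoc, hc]
  group

def kk (p : ↥A4) : N := Z.act (f p) t0 * (f (conjT p))⁻¹

include hf1 in
lemma kk_ker (p : ↥A4) : Z.μ (kk Z f p) = 1 := by
  unfold kk
  rw [map_mul, map_inv, Z.cm1, hf1, hf1]
  show t0⁻¹ * ↑p * t0 * (↑(conjT p))⁻¹ = 1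
  show t0⁻¹ * ↑p * t0 * (t0⁻¹ * ↑p * t0)⁻¹ = 1
  group

include hf1 in
lemma kk_central (p : ↥A4) (y : N) : kk Z f p * y = y * kk Z f p :=
  ker_central Z (kk_ker Z f hf1 p) y

lemma conjT_mul (p q : ↥A4) : conjT (p * q) = conjT p * conjT q := by
  refine Subtype.ext ?_
  show t0⁻¹ * (↑p * ↑q) * t0 = (t0⁻¹ * ↑p * t0) * (t0⁻¹ * ↑q * t0)
  group

include hf1 in
lemma kk_mul (p q : ↥A4) : kk Z f (p * q) = kk Z f p * kk Z f q := by
  have h : kk Z f (p * q)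
      = Z.act (f p) t0 * (Z.act (f q) t0 * (f (conjT q))⁻¹) * (f (conjT p))⁻¹ := by
    unfold kk
    rw [map_mul, Z.act_mul, conjT_mul, map_mul, mul_inv_rev]
    group
  rw [h]
  show Z.act (f p) t0 * kk Z f q * (f (conjT p))⁻¹ = kk Z f p * kk Z f q
  rw [mul_assoc, kk_central Z f hf1 q ((f (conjT p))⁻¹), ← mul_assoc]
  rfl

include hf1 in
lemma kk_one : kk Z f 1 = 1 := by
  have := kk_mul Z f hf1 1 1
  rw [mul_one] at this
  exact (left_eq_mul.mp this)

include hf1 in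
lemma kk_inv (p : ↥A4) : kk Z f p⁻¹ = (kk Z f p)⁻¹ := by
  have := kk_mul Z f hf1 p⁻¹ p
  rw [inv_mul_cancel, kk_one Z f hf1] at this
  exact eq_inv_of_mul_eq_one_left this.symm

include hf1 in
lemma kk_pow (p : ↥A4) (n : ℕ) : kk Z f (p ^ n) = (kk Z f p) ^ n := by
  induction n with
  | zero => simpa using kk_one Z f hf1
  | succ n ih => rw [pow_succ, pow_succ, kk_mul Z f hf1, ih]

include hf1 in

lemma kk_comm (x y : ↥A4) : kk Z f (x * y * x⁻¹ * y⁻¹) = 1 := by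
  rw [kk_mul Z f hf1, kk_mul Z f hf1, kk_mul Z f hf1, kk_inv Z f hf1, kk_inv Z f hf1]
  rw [kk_central Z f hf1 x (kk Z f y)]
  group

end Universal

section Universal2

variable {N : Type} [Group N] (Z : CrossedModule N Q4) (f : ↥A4 →* N)
  (hf1 : ∀ m, Z.μ (f m) = A4.subtype m)
  (hf2 : ∀ m p, f ((conjCM ↥A4).act m p) = Z.act (f m) (A4.subtype p))

def y1' : ↥A4 := ⟨Equiv.swap 0 2 * Equiv.swap 2 3, y1_mem⟩
def y2' : ↥A4 := ⟨Equiv.swap 0 1 * Equiv.swap 1 3, y2_mem⟩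
def v1' : ↥A4 := ⟨Equiv.swap 0 1 * Equiv.swap 2 3, v1_mem⟩
def v2' : ↥A4 := ⟨Equiv.swap 0 2 * Equiv.swap 1 3, v2_mem⟩
def v3' : ↥A4 := ⟨Equiv.swap 0 3 * Equiv.swap 1 2, v3_mem⟩

include hf1 in
lemma kk_eq (p : ↥A4) : kk Z f p = (kk Z f c0') ^ (w ↑p).val := by
  set e := (w ↑p).val with he
  set v : ↥A4 := (c0' ^ e)⁻¹ * p with hv
  have hvcoe : (↑v : Q4) = (c0 ^ (w (↑p : Q4)).val)⁻¹ * ↑p := by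
    rw [hv, he]
    push_cast
    rfl
  have hp : p = c0' ^ e * v := by rw [hv]; group
  have hkv : kk Z f v = 1 := by
    rcases decomp ↑p p.2 with h | h | h | h
    · have : v = 1 := Subtype.ext (by rw [hvcoe]; exact h)
      rw [this]; exact kk_one Z f hf1
    · have : v = v3' * y1' * v3'⁻¹ * y1'⁻¹ := Subtype.ext (by
        rw [hvcoe, h]; exact comm_v1)
      rw [this]; exact kk_comm Z f hf1 _ _
    · have : v = v3' * y2' * v3'⁻¹ * y2'⁻¹ := Subtype.ext (by
        rw [hvcoe, h]; exact comm_v2)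
      rw [this]; exact kk_comm Z f hf1 _ _
    · have : v = y1' * v2' * y1'⁻¹ * v2'⁻¹ := Subtype.ext (by
        rw [hvcoe, h]; exact comm_v3)
      rw [this]; exact kk_comm Z f hf1 _ _
  calc kk Z f p = kk Z f (c0' ^ e * v) := by rw [← hp]
  _ = kk Z f (c0' ^ e) * kk Z f v := kk_mul Z f hf1 _ _
  _ = (kk Z f c0') ^ e := by rw [hkv, mul_one, kk_pow Z f hf1]

def pw (z : ZMod 3) : N := (kk Z f c0') ^ z.val

include hf1 in
lemma kappa_cube : (kk Z f c0') ^ 3 = 1 := by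
  rw [← kk_pow Z f hf1]
  have : c0' ^ 3 = 1 := Subtype.ext (by push_cast; exact c0_cube)
  rw [this]
  exact kk_one Z f hf1

include hf1 in
lemma pw_add (a b : ZMod 3) : pw Z f (a + b) = pw Z f a * pw Z f b := by
  unfold pw
  rw [ZMod.val_add, ← pow_eq_pow_mod _ (kappa_cube Z f hf1), pow_add]

include hf1 in
lemma pw_ker (z : ZMod 3) : Z.μ (pw Z f z) = 1 := by
  unfold pw
  rw [map_pow, kk_ker Z f hf1, one_pow]

include hf1 in
lemma pw_central (z : ZMod 3) (y : N) : pw Z f z * y = y * pw Z f z :=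
  ker_central Z (pw_ker Z f hf1 z) y

include hf1 in
lemma key2 (p : ↥A4) : Z.act (f p) t0 = f (conjT p) * pw Z f (w ↑p) := by
  have h1 : kk Z f p = pw Z f (w ↑p) := kk_eq Z f hf1 p
  have h2 : Z.act (f p) t0 = kk Z f p * f (conjT p) := by unfold kk; group
  rw [h2, h1, pw_central Z f hf1]

lemma conjT_conjT (p : ↥A4) : conjT (conjT p) = p := by
  refine Subtype.ext ?_
  show t0⁻¹ * (t0⁻¹ * ↑p * t0) * t0 = ↑p
  have h2 : t0⁻¹ = t0 := by
    rw [eq_comm, eq_inv_iff_mul_eq_one, t0t0]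
  rw [h2]
  calc t0 * (t0 * ↑p * t0) * t0 = (t0 * t0) * ↑p * (t0 * t0) := by group
  _ = ↑p := by rw [t0t0]; group

include hf1 in
lemma act_kappa_t0 : Z.act (kk Z f c0') t0 = kk Z f c0' := by
  have hw : w ↑(conjT c0') = 2 := w_tc0t
  have step : Z.act (kk Z f c0') t0
      = Z.act (Z.act (f c0') t0) t0 * (Z.act (f (conjT c0')) t0)⁻¹ := by
    unfold kk
    rw [Z.act_mul, act_inv]
  rw [step, Z.act_act, t0t0, Z.act_one, key2 Z f hf1 (conjT c0'), conjT_conjT, hw]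
  have h21 : (pw Z f 2)⁻¹ = pw Z f 1 := by
    rw [inv_eq_iff_mul_eq_one, ← pw_add Z f hf1]
    have h0 : (2 + 1 : ZMod 3) = 0 := by decide
    rw [h0]
    show (kk Z f c0') ^ (0 : ZMod 3).val = 1
    have : (0 : ZMod 3).val = 0 := rfl
    rw [this, pow_zero]
  have h1 : pw Z f 1 = kk Z f c0' := by
    show (kk Z f c0') ^ (1 : ZMod 3).val = kk Z f c0'
    have : (1 : ZMod 3).val = 1 := rfl
    rw [this, pow_one]
  rw [mul_inv_rev, ← mul_assoc, h21, ← pw_central Z f hf1 1 (f c0'),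
    mul_assoc, mul_inv_cancel, mul_one, h1]

include hf1 in
lemma act_pw (z : ZMod 3) (q : Q4) : Z.act (pw Z f z) q = pw Z f z := by
  rcases sign_cases q with h | h
  · exact act_even_ker Z f hf1 (pw_ker Z f hf1 z) (Equiv.Perm.mem_alternatingGroup.mpr h)
  · have hq : q = t0 * (t0 * q) := by rw [← mul_assoc, t0t0, one_mul]
    have heven : t0 * q ∈ A4 := by
      rw [Equiv.Perm.mem_alternatingGroup, map_mul, sign_t0, h]
      norm_num
    have hpwt : Z.act (pw Z f z) t0 = pw Z f z := by
      unfold pw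
      rw [act_pow, act_kappa_t0 Z f hf1]
    rw [hq, ← Z.act_act, hpwt,
      act_even_ker Z f hf1 (pw_ker Z f hf1 z) heven]

end Universal2

section Universal3

variable {N : Type} [Group N] (Z : CrossedModule N Q4) (f : ↥A4 →* N)

def φmap (hf1 : ∀ m, Z.μ (f m) = A4.subtype m) : N₀ →* N where
  toFun x := f x.1 * pw Z f (Multiplicative.toAdd x.2)
  map_one' := by
    show f 1 * pw Z f (Multiplicative.toAdd (1 : Multiplicative (ZMod 3))) = 1
    rw [map_one]
    show 1 * (kk Z f c0') ^ (0 : ZMod 3).val = 1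
    have : (0 : ZMod 3).val = 0 := rfl
    rw [this, pow_zero, mul_one]
  map_mul' a b := by
    show f (a.1 * b.1) * pw Z f (Multiplicative.toAdd (a.2 * b.2)) = _
    have ht : Multiplicative.toAdd (a.2 * b.2)
        = Multiplicative.toAdd a.2 + Multiplicative.toAdd b.2 := rfl
    rw [map_mul, ht, pw_add Z f hf1]
    have hc := pw_central Z f hf1 (Multiplicative.toAdd a.2) (f b.1)
    calc f a.1 * f b.1 * (pw Z f (Multiplicative.toAdd a.2) * pw Z f (Multiplicative.toAdd b.2))
        = f a.1 * ((f b.1 * pw Z f (Multiplicative.toAdd a.2)) * pw Z f (Multiplicative.toAdd b.2)) := by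
          group
    _ = f a.1 * ((pw Z f (Multiplicative.toAdd a.2) * f b.1) * pw Z f (Multiplicative.toAdd b.2)) := by
          rw [← hc]
    _ = _ := by group

variable (hf1 : ∀ m, Z.μ (f m) = A4.subtype m)
  (hf2 : ∀ m p, f ((conjCM ↥A4).act m p) = Z.act (f m) (A4.subtype p))

include hf1 in
lemma φmap_μ (x : N₀) : Z.μ (φmap Z f hf1 x) = Z₀.μ x := by
  show Z.μ (f x.1 * pw Z f (Multiplicative.toAdd x.2)) = A4.subtype x.1
  rw [map_mul, hf1, pw_ker Z f hf1, mul_one]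

include hf1 hf2 in
lemma φmap_act_even (x : N₀) {q : Q4} (hq : q ∈ A4) :
    φmap Z f hf1 (Z₀.act x q) = Z.act (φmap Z f hf1 x) q := by
  have hs : Equiv.Perm.sign q = 1 := Equiv.Perm.mem_alternatingGroup.mp hq
  have hfst : f ⟨q⁻¹ * ↑x.1 * q, conj_mem q x.1.2⟩ = Z.act (f x.1) q := by
    have := hf2 x.1 ⟨q, hq⟩
    have he : ((conjCM ↥A4).act x.1 ⟨q, hq⟩) = ⟨q⁻¹ * ↑x.1 * q, conj_mem q x.1.2⟩ :=
      Subtype.ext rfl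
    rw [he] at this
    exact this
  show f ⟨q⁻¹ * ↑x.1 * q, conj_mem q x.1.2⟩ *
      pw Z f (Multiplicative.toAdd (x.2 * Multiplicative.ofAdd (ψ q * w ↑x.1)))
    = Z.act (f x.1 * pw Z f (Multiplicative.toAdd x.2)) q
  rw [Z.act_mul, act_pw Z f hf1, hfst, ψ_even hs]
  congr 1
  simp

include hf1 hf2 in
lemma φmap_act_t0 (x : N₀) :
    φmap Z f hf1 (Z₀.act x t0) = Z.act (φmap Z f hf1 x) t0 := by
  have hfst : f ⟨t0⁻¹ * ↑x.1 * t0, conj_mem t0 x.1.2⟩ = f (conjT x.1) := rfl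
  show f ⟨t0⁻¹ * ↑x.1 * t0, conj_mem t0 x.1.2⟩ *
      pw Z f (Multiplicative.toAdd (x.2 * Multiplicative.ofAdd (ψ t0 * w ↑x.1)))
    = Z.act (f x.1 * pw Z f (Multiplicative.toAdd x.2)) t0
  have hψ : ψ t0 = 1 := ψ_odd sign_t0
  have ht : Multiplicative.toAdd (x.2 * Multiplicative.ofAdd (ψ t0 * w ↑x.1))
      = w ↑x.1 + Multiplicative.toAdd x.2 := by
    rw [hψ]
    simp
    ring
  rw [ht, pw_add Z f hf1, hfst, Z.act_mul, act_pw Z f hf1,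
    key2 Z f hf1 x.1, mul_assoc]

include hf1 hf2 in
lemma φmap_act (x : N₀) (q : Q4) :
    φmap Z f hf1 (Z₀.act x q) = Z.act (φmap Z f hf1 x) q := by
  rcases sign_cases q with h | h
  · exact φmap_act_even Z f hf1 hf2 x (Equiv.Perm.mem_alternatingGroup.mpr h)
  · have heven : t0 * q ∈ A4 := by
      rw [Equiv.Perm.mem_alternatingGroup, map_mul, sign_t0, h]
      norm_num
    have hq : q = t0 * (t0 * q) := by rw [← mul_assoc, t0t0, one_mul]
    rw [hq, ← Z₀.act_act, ← Z.act_act, φmap_act_even Z f hf1 hf2 _ heven,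
      φmap_act_t0 Z f hf1 hf2]

include hf1 in
lemma φmap_j (m : ↥A4) : φmap Z f hf1 (j₀ m) = f m := by
  show f m * pw Z f (Multiplicative.toAdd (1 : Multiplicative (ZMod 3))) = f m
  show f m * (kk Z f c0') ^ (0 : ZMod 3).val = f m
  have : (0 : ZMod 3).val = 0 := rfl
  rw [this, pow_zero, mul_one]

lemma pow_gen (n : ℕ) :
    ((1, Multiplicative.ofAdd (1 : ZMod 3)) : N₀) ^ n
      = ((1, Multiplicative.ofAdd (n : ZMod 3)) : N₀) := by
  refine Prod.ext ?_ ?_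
  · show (1 : ↥A4) ^ n = 1
    rw [one_pow]
  · show (Multiplicative.ofAdd (1 : ZMod 3)) ^ n = Multiplicative.ofAdd (n : ZMod 3)
    rw [← ofAdd_nsmul]
    congr 1
    simp

lemma gen_eq : ((1, Multiplicative.ofAdd (1 : ZMod 3)) : N₀)
    = Z₀.act (j₀ c0') t0 * (j₀ (conjT c0'))⁻¹ := by
  refine Prod.ext (Subtype.ext ?_) ?_
  · show (1 : Q4) = (t0⁻¹ * c0 * t0) * (t0⁻¹ * c0 * t0)⁻¹
    group
  · show Multiplicative.ofAdd (1 : ZMod 3)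
      = 1 * Multiplicative.ofAdd (ψ t0 * w c0) * 1
    rw [ψ_odd sign_t0, w_c0, one_mul, mul_one, mul_one]

lemma elt_decomp (x : N₀) :
    x = j₀ x.1 * ((1, Multiplicative.ofAdd (1 : ZMod 3)) : N₀) ^ (Multiplicative.toAdd x.2).val := by
  rw [pow_gen]
  refine Prod.ext (Subtype.ext ?_) ?_
  · show (↑x.1 : Q4) = ↑x.1 * ↑(1 : ↥A4)
    simp
  · show x.2 = 1 * Multiplicative.ofAdd (((Multiplicative.toAdd x.2).val : ZMod 3))
    rw [ZMod.natCast_val, ZMod.cast_id, one_mul, ofAdd_toAdd]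

include hf1 hf2 in
lemma φuniq (φ' : N₀ →* N)
    (h1 : ∀ x, Z.μ (φ' x) = Z₀.μ x)
    (h2 : ∀ x q, φ' (Z₀.act x q) = Z.act (φ' x) q)
    (h3 : ∀ m, φ' (j₀ m) = f m) :
    φ' = φmap Z f hf1 := by
  have hκ : φ' ((1, Multiplicative.ofAdd (1 : ZMod 3)) : N₀) = kk Z f c0' := by
    rw [gen_eq, map_mul, map_inv, h2, h3, h3]
    rfl
  have hφκ : φmap Z f hf1 ((1, Multiplicative.ofAdd (1 : ZMod 3)) : N₀) = kk Z f c0' := by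
    show f 1 * pw Z f (Multiplicative.toAdd (Multiplicative.ofAdd (1 : ZMod 3))) = kk Z f c0'
    rw [map_one, one_mul]
    show (kk Z f c0') ^ (1 : ZMod 3).val = kk Z f c0'
    have : (1 : ZMod 3).val = 1 := rfl
    rw [this, pow_one]
  ext x
  rw [elt_decomp x, map_mul, map_mul, map_pow, map_pow, hκ, hφκ, h3, φmap_j Z f hf1]

end Universal3

lemma isInduced₀ : IsInducedCrossedModule (conjCM ↥A4) A4.subtype Z₀ j₀ := by
  refine ⟨mor₀, ?_⟩
  intro N _ Z f hf
  have hf1 : ∀ m, Z.μ (f m) = A4.subtype m := fun m => hf.1 m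
  have hf2 : ∀ m p, f ((conjCM ↥A4).act m p) = Z.act (f m) (A4.subtype p) := hf.2
  exact ⟨φmap Z f hf1, ⟨φmap_μ Z f hf1, φmap_act Z f hf1 hf2, φmap_j Z f hf1⟩,
    fun φ' h => φuniq Z f hf1 hf2 φ' h.1 h.2.1 h.2.2⟩

theorem main {I : Type} [Group I] (Y : CrossedModule I Q4) (j : ↥A4 →* I)
    (hInd : IsInducedCrossedModule (conjCM ↥A4) A4.subtype Y j) :
    Nonempty (I ≃* ↥(alternatingGroup (Fin 4)) × Multiplicative (ZMod 3)) ∧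
    IsCyclic ↥Y.μ.ker ∧ Nat.card Y.μ.ker = 3 := by
  obtain ⟨hmor, huniv⟩ := hInd
  obtain ⟨φ, ⟨hφ1, hφ2, hφ3⟩, hφu⟩ := huniv N₀ Z₀ j₀ mor₀
  obtain ⟨χ, ⟨hχ1, hχ2, hχ3⟩, hχu⟩ := isInduced₀.2 I Y j hmor
  -- χ ∘ φ = id on I
  obtain ⟨ρ, hρ, hρu⟩ := huniv I Y j hmor
  have e1 : χ.comp φ = ρ := by
    refine hρu _ ⟨fun x => ?_, fun x q => ?_, fun m => ?_⟩
    · show Y.μ (χ (φ x)) = Y.μ x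
      rw [hχ1, hφ1]
    · show χ (φ (Y.act x q)) = Y.act (χ (φ x)) q
      rw [hφ2, hχ2]
    · show χ (φ (j m)) = j m
      rw [hφ3, hχ3]
  have e2 : MonoidHom.id I = ρ := by
    refine hρu _ ⟨fun x => rfl, fun x q => rfl, fun m => rfl⟩
  have eid : ∀ x : I, χ (φ x) = x := fun x =>
    DFunLike.congr_fun (e1.trans e2.symm) x
  -- φ ∘ χ = id on N₀
  obtain ⟨σ, hσ, hσu⟩ := isInduced₀.2 N₀ Z₀ j₀ mor₀
  have e3 : φ.comp χ = σ := by
    refine hσu _ ⟨fun x => ?_, fun x q => ?_, fun m => ?_⟩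
    · show Z₀.μ (φ (χ x)) = Z₀.μ x
      rw [hφ1, hχ1]
    · show φ (χ (Z₀.act x q)) = Z₀.act (φ (χ x)) q
      rw [hχ2, hφ2]
    · show φ (χ (j₀ m)) = j₀ m
      rw [hχ3, hφ3]
  have e4 : MonoidHom.id N₀ = σ := hσu _ ⟨fun x => rfl, fun x q => rfl, fun m => rfl⟩
  have eid2 : ∀ x : N₀, φ (χ x) = x := fun x =>
    DFunLike.congr_fun (e3.trans e4.symm) x
  have eIso : I ≃* N₀ :=
    { toFun := φ, invFun := χ, left_inv := eid, right_inv := eid2,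
      map_mul' := φ.map_mul }
  have kerIso : ↥Y.μ.ker ≃* Multiplicative (ZMod 3) := by
    refine
      { toFun := fun x => (φ ↑x).2
        invFun := fun d => ⟨χ (1, d), ?_⟩
        left_inv := fun x => ?_
        right_inv := fun d => ?_
        map_mul' := fun x y => ?_ }
    · show χ (1, d) ∈ Y.μ.ker
      rw [MonoidHom.mem_ker, hχ1]
      rfl
    · have hfst : (φ ↑x).1 = 1 := by
        have h1 : (↑((φ ↑x).1) : Q4) = Z₀.μ (φ ↑x) := rfl
        have h2 : Z₀.μ (φ ↑x) = Y.μ ↑x := hφ1 ↑x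
        have h3 : Y.μ ↑x = 1 := x.2
        exact Subtype.coe_injective (h1.trans (h2.trans h3))
      refine Subtype.ext ?_
      show χ (1, (φ ↑x).2) = ↑x
      have : ((1 : ↥A4), (φ ↑x).2) = φ ↑x := Prod.ext hfst.symm rfl
      rw [this, eid]
    · show (φ (χ (1, d))).2 = d
      rw [eid2]
    · show (φ (↑(x * y))).2 = (φ ↑x).2 * (φ ↑y).2
      have : (↑(x * y) : I) = ↑x * ↑y := rfl
      rw [this, map_mul]
      rfl
  have hcard3 : Nat.card (Multiplicative (ZMod 3)) = 3 := by
    rw [Nat.card_congr Multiplicative.toAdd, Nat.card_zmod]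
  refine ⟨⟨eIso⟩, ?_, ?_⟩
  · have : IsCyclic (Multiplicative (ZMod 3)) := isCyclic_of_prime_card (p := 3) hcard3
    exact isCyclic_of_surjective kerIso.symm.toMonoidHom kerIso.symm.surjective
  · rw [Nat.card_congr kerIso.toEquiv, hcard3]

end A4S4Aux

/-- Let `Q = S₄`, `P = A₄` its alternating subgroup, and consider the identity crossed
module on `P` and the inclusion `ι : P → Q`.  For any induced crossed module
`(∂ : I → Q, j)` of `(id_P : P → P)` along `ι`, the group `I` is isomorphic to `A₄ × C₃`
and `ker ∂` is cyclic of order 3. -/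
theorem induced_A4_S4 (P : Subgroup (Equiv.Perm (Fin 4)))
    (hP : P = alternatingGroup (Fin 4))
    {I : Type} [Group I] (Y : CrossedModule I (Equiv.Perm (Fin 4))) (j : ↥P →* I)
    (hInd : IsInducedCrossedModule (conjCM ↥P) P.subtype Y j) :
    Nonempty (I ≃* ↥(alternatingGroup (Fin 4)) × Multiplicative (ZMod 3)) ∧
    IsCyclic ↥Y.μ.ker ∧ Nat.card Y.μ.ker = 3 := by
  subst hP
  exact A4S4Aux.main Y j hInd
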